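/- Let G be a group, H a subgroup, Δ a G-set such that H fixes some point of Δ, and M an H-module. Then the induced module Ind_H^G M is Δ-projective, i.e., a direct summand of a module of the form N ⊗ ℤΔ for some G-module N. -/

import Mathlib

open TensorProduct

variable (G : Type) [Group G]

/-- The permutation representation on `H →₀ k` (the old meaning of `Representation.ofMulAction`). -/
noncomputable def finsuppOfMulAction (k G H : Type*) [CommSemiring k] [Monoid G] [MulAction G H] :
    Representation k G (H →₀ k) where
  toFun g := Finsupp.lmapDomain k k (g • ·)
  map_one' := by ext; simp
  map_mul' x y := by ext; simp [mul_smul]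

@[simp]
lemma finsuppOfMulAction_single (k G H : Type*) [CommSemiring k] [Monoid G] [MulAction G H]
    (g : G) (x : H) (r : k) :
    finsuppOfMulAction k G H g (Finsupp.single x r) = Finsupp.single (g • x) r := by
  simp [finsuppOfMulAction]

/-- The representation of `G` on `ℤG ⊗ M` by left translation on the first factor. -/
noncomputable def freeRep (M : Type) [AddCommGroup M] [Module ℤ M] :
    Representation ℤ G ((G →₀ ℤ) ⊗[ℤ] M) where
  toFun g := LinearMap.rTensor M (finsuppOfMulAction ℤ G G g)
  map_one' := by
    exact (congrArg (LinearMap.rTensor M) (map_one _)).trans (LinearMap.rTensor_id M _)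
  map_mul' g₁ g₂ := by
    exact (congrArg (LinearMap.rTensor M) (map_mul _ _ _)).trans (LinearMap.rTensor_mul M _ _)

/-- The submodule of relations `gh ⊗ m - g ⊗ h·m` defining the induced module
`Ind_H^G M = ℤG ⊗_{ℤH} M` as a quotient of `ℤG ⊗_ℤ M`. -/
noncomputable def indRel (H : Subgroup G) (M : Type) [AddCommGroup M] [Module ℤ M]
    (ρM : Representation ℤ H M) : Submodule ℤ ((G →₀ ℤ) ⊗[ℤ] M) :=
  Submodule.span ℤ {x | ∃ (g : G) (h : H) (m : M),
    x = Finsupp.single (g * (h : G)) (1 : ℤ) ⊗ₜ[ℤ] m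
      - Finsupp.single g (1 : ℤ) ⊗ₜ[ℤ] (ρM h m)}

lemma freeRep_mapsTo (H : Subgroup G) (M : Type) [AddCommGroup M] [Module ℤ M]
    (ρM : Representation ℤ H M) (g : G) :
    indRel G H M ρM ≤ (indRel G H M ρM).comap (freeRep G M g) := by
  rw [indRel, Submodule.span_le]
  rintro x ⟨a, h, m, rfl⟩
  have heq : (freeRep G M g) (Finsupp.single (a * (h : G)) (1 : ℤ) ⊗ₜ[ℤ] m
        - Finsupp.single a (1 : ℤ) ⊗ₜ[ℤ] (ρM h m))
      = Finsupp.single (g * (a * (h : G))) (1 : ℤ) ⊗ₜ[ℤ] m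
        - Finsupp.single (g * a) (1 : ℤ) ⊗ₜ[ℤ] (ρM h m) := by
    show LinearMap.rTensor M (finsuppOfMulAction ℤ G G g) _ = _
    simp only [freeRep, MonoidHom.coe_mk, OneHom.coe_mk, map_sub, LinearMap.rTensor_tmul,
      finsuppOfMulAction_single, smul_eq_mul]
  simp only [SetLike.mem_coe, Submodule.mem_comap, heq]
  exact Submodule.subset_span ⟨g * a, h, m, by rw [mul_assoc]⟩

/-- The induced module `Ind_H^G M = ℤG ⊗_{ℤH} M`, as a `G`-representation. -/
noncomputable def indRep (H : Subgroup G) (M : Type) [AddCommGroup M] [Module ℤ M]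
    (ρM : Representation ℤ H M) :
    Representation ℤ G ((((G →₀ ℤ) ⊗[ℤ] M)) ⧸ indRel G H M ρM) where
  toFun g := Submodule.mapQ _ _ (freeRep G M g) (freeRep_mapsTo G H M ρM g)
  map_one' := by
    apply Submodule.linearMap_qext
    ext v
    simp [Submodule.mapQ_apply]
    rfl
  map_mul' g₁ g₂ := by
    apply Submodule.linearMap_qext
    ext v
    simp [Submodule.mapQ_apply, map_mul]
    rfl

/-- A `G`-module `M` (given by a representation `ρM`) is `Δ`-projective if it is an
equivariant direct summand of `N ⊗ ℤΔ` (diagonal `G`-action) for some `G`-module `N`. -/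
def IsDeltaProjective (Δ : Type) [MulAction G Δ]
    (M : Type) [AddCommGroup M] [Module ℤ M] (ρM : Representation ℤ G M) : Prop :=
  ∃ (N : ModuleCat.{0} ℤ) (ρN : Representation ℤ G N)
    (i : M →ₗ[ℤ] N ⊗[ℤ] (Δ →₀ ℤ)) (r : N ⊗[ℤ] (Δ →₀ ℤ) →ₗ[ℤ] M),
      (∀ g : G, i ∘ₗ ρM g = ((ρN.tprod (finsuppOfMulAction ℤ G Δ)) g : N ⊗[ℤ] (Δ →₀ ℤ) →ₗ[ℤ] N ⊗[ℤ] (Δ →₀ ℤ)) ∘ₗ i) ∧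
      (∀ g : G, r ∘ₗ ((ρN.tprod (finsuppOfMulAction ℤ G Δ)) g : N ⊗[ℤ] (Δ →₀ ℤ) →ₗ[ℤ] N ⊗[ℤ] (Δ →₀ ℤ)) = ρM g ∘ₗ r) ∧
      r ∘ₗ i = LinearMap.id

/-!
Take `N = Ind_H^G M` itself. Since `H` fixes `δ`, the assignment `g ⊗ m ↦ (g ⊗ m) ⊗ g•δ` is
`H`-balanced, so it descends to a `G`-equivariant map `Ind_H^G M → Ind_H^G M ⊗ ℤΔ`; tensoring
with the augmentation `ℤΔ → ℤ` is an equivariant left inverse of it.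
-/

section Augmentation

variable {G} {k N : Type*} [CommRing k] [AddCommGroup N] [Module k N] (Δ : Type*) [MulAction G Δ]

noncomputable def augRetraction : N ⊗[k] (Δ →₀ k) →ₗ[k] N :=
  (TensorProduct.rid k N).toLinearMap ∘ₗ
    LinearMap.lTensor N (Finsupp.linearCombination k fun _ : Δ => (1 : k))

@[simp]
lemma augRetraction_tmul_single (n : N) (d : Δ) (c : k) :
    augRetraction Δ (n ⊗ₜ[k] Finsupp.single d c) = c • n := by
  simp [augRetraction]

lemma augRetraction_comp_tprod (ρ : Representation k G N) (g : G) :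
    augRetraction Δ ∘ₗ (ρ.tprod (finsuppOfMulAction k G Δ) g) = ρ g ∘ₗ augRetraction Δ := by
  ext n d
  simp

end Augmentation

lemma lift_finsuppLift_single_one_tmul {R X M P : Type*} [CommSemiring R] [AddCommMonoid M]
    [Module R M] [AddCommMonoid P] [Module R P] (F : X → M →ₗ[R] P) (x : X) (m : M) :
    TensorProduct.lift (Finsupp.lift (M →ₗ[R] P) R X F) (Finsupp.single x 1 ⊗ₜ[R] m) = F x m := by
  rw [TensorProduct.lift.tmul]
  simp

section Induced

variable {G} {H : Subgroup G} {M : Type} [AddCommGroup M] [Module ℤ M] (ρM : Representation ℤ H M)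

noncomputable def indMk (g : G) (m : M) : ((G →₀ ℤ) ⊗[ℤ] M) ⧸ indRel G H M ρM :=
  Submodule.Quotient.mk (Finsupp.single g 1 ⊗ₜ[ℤ] m)

lemma indMk_mul (g : G) (h : H) (m : M) : indMk ρM (g * h) m = indMk ρM g (ρM h m) :=
  (Submodule.Quotient.eq _).2 <| Submodule.subset_span ⟨g, h, m, rfl⟩

@[simp]
lemma indRep_indMk (g g' : G) (m : M) :
    indRep G H M ρM g (indMk ρM g' m) = indMk ρM (g * g') m := by
  change Submodule.Quotient.mk (LinearMap.rTensor M (finsuppOfMulAction ℤ G G g) _) = _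
  simp [indMk]

lemma ind_hom_ext {P : Type*} [AddCommGroup P] [Module ℤ P]
    {f f' : ((G →₀ ℤ) ⊗[ℤ] M) ⧸ indRel G H M ρM →ₗ[ℤ] P}
    (hff' : ∀ g m, f (indMk ρM g m) = f' (indMk ρM g m)) : f = f' := by
  classical
  refine LinearMap.ext fun x => Submodule.Quotient.induction_on _ x fun t => ?_
  obtain ⟨y, rfl⟩ := (TensorProduct.finsuppScalarLeft ℤ M G).symm.surjective t
  induction y using Finsupp.induction_linear with
  | zero => simp only [map_zero, Submodule.Quotient.mk_zero]
  | add y z hy hz => simp only [map_add, Submodule.Quotient.mk_add, hy, hz]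
  | single g m => rw [TensorProduct.finsuppScalarLeft_symm_apply_single]; exact hff' g m

noncomputable def indLift {P : Type*} [AddCommGroup P] (F : G → M →ₗ[ℤ] P)
    (hF : ∀ (g : G) (h : H) (m : M), F (g * h) m = F g (ρM h m)) :
    ((G →₀ ℤ) ⊗[ℤ] M) ⧸ indRel G H M ρM →ₗ[ℤ] P :=
  (indRel G H M ρM).liftQ (TensorProduct.lift (Finsupp.lift (M →ₗ[ℤ] P) ℤ G F)) <| by
    rw [indRel, Submodule.span_le]
    rintro _ ⟨g, h, m, rfl⟩
    change TensorProduct.lift _ (_ - _) = 0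
    rw [map_sub, lift_finsuppLift_single_one_tmul, lift_finsuppLift_single_one_tmul, hF, sub_self]

@[simp]
lemma indLift_indMk {P : Type*} [AddCommGroup P] (F : G → M →ₗ[ℤ] P)
    (hF : ∀ (g : G) (h : H) (m : M), F (g * h) m = F g (ρM h m)) (g : G) (m : M) :
    indLift ρM F hF (indMk ρM g m) = F g m :=
  lift_finsuppLift_single_one_tmul F g m

variable {Δ : Type} [MulAction G Δ] {δ : Δ}

noncomputable def indToTensor (hδ : ∀ h ∈ H, h • δ = δ) :
    ((G →₀ ℤ) ⊗[ℤ] M) ⧸ indRel G H M ρM →ₗ[ℤ]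
      (((G →₀ ℤ) ⊗[ℤ] M) ⧸ indRel G H M ρM) ⊗[ℤ] (Δ →₀ ℤ) :=
  indLift ρM (fun g => (TensorProduct.mk ℤ _ (Δ →₀ ℤ)).flip (Finsupp.single (g • δ) 1) ∘ₗ
      (indRel G H M ρM).mkQ ∘ₗ TensorProduct.mk ℤ (G →₀ ℤ) M (Finsupp.single g 1))
    fun g h m => by
      -- `indRel` lives in the `AddCommGroup.toIntModule` structure on `ℤG ⊗ M`, not the tensor
      -- product one, so `LinearMap.comp_apply` does not rewrite compositions through the
      -- quotient (here and below); they are unfolded by `change` instead.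
      change indMk ρM (g * h) m ⊗ₜ[ℤ] _ = indMk ρM g (ρM h m) ⊗ₜ[ℤ] _
      rw [indMk_mul, mul_smul, hδ h h.2]

@[simp]
lemma indToTensor_indMk (hδ : ∀ h ∈ H, h • δ = δ) (g : G) (m : M) :
    indToTensor ρM hδ (indMk ρM g m) = indMk ρM g m ⊗ₜ[ℤ] Finsupp.single (g • δ) 1 :=
  indLift_indMk ρM _ _ g m

lemma indToTensor_comp_indRep (hδ : ∀ h ∈ H, h • δ = δ) (g : G) :
    indToTensor ρM hδ ∘ₗ indRep G H M ρM g =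
      (indRep G H M ρM).tprod (finsuppOfMulAction ℤ G Δ) g ∘ₗ indToTensor ρM hδ :=
  ind_hom_ext ρM fun g' m => by
    change indToTensor ρM hδ (indRep G H M ρM g (indMk ρM g' m)) =
      (indRep G H M ρM).tprod (finsuppOfMulAction ℤ G Δ) g (indToTensor ρM hδ (indMk ρM g' m))
    simp [mul_smul]

lemma augRetraction_comp_indToTensor (hδ : ∀ h ∈ H, h • δ = δ) :
    augRetraction Δ ∘ₗ indToTensor ρM hδ = LinearMap.id :=
  ind_hom_ext ρM fun g m => by
    change augRetraction Δ (indToTensor ρM hδ (indMk ρM g m)) = indMk ρM g m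
    simp

end Induced

/-- If `H` fixes a point of the `G`-set `Δ` and `M` is an `H`-module, then the induced
module `Ind_H^G M` is `Δ`-projective. -/
theorem stmt11 (H : Subgroup G) (Δ : Type) [MulAction G Δ]
    (hfix : ∃ δ : Δ, ∀ h ∈ H, h • δ = δ)
    (M : Type) [AddCommGroup M] [Module ℤ M] (ρM : Representation ℤ H M) :
    IsDeltaProjective G Δ (((G →₀ ℤ) ⊗[ℤ] M) ⧸ indRel G H M ρM) (indRep G H M ρM) := by
  obtain ⟨δ, hδ⟩ := hfix
  exact ⟨ModuleCat.of ℤ _, indRep G H M ρM, indToTensor ρM hδ, augRetraction Δ,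
    indToTensor_comp_indRep ρM hδ, augRetraction_comp_tprod Δ _,
    augRetraction_comp_indToTensor ρM hδ⟩
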